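/- Conditions (A) (ω ⊆ Λ, equivalently ωΛ = Λ) hold if and only if both Λ = Λ** and ω:Λ = ω(R:Λ) hold together with R:Λ ⊆ R:ω. -/

import Mathlib

open Submodule IsLocalRing

noncomputable section

/-- Length of an `R`-module, defined as the Krull dimension of its submodule lattice. -/
def modLength (R : Type*) [Ring R] (M : Type*) [AddCommGroup M] [Module R M] : WithBot ℕ∞ :=
  Order.krullDim (Submodule R M)

/-- Length of the quotient `I / J` for submodules `J ≤ I` of an ambient module. -/
def qlen (R : Type*) [CommRing R] {K : Type*} [AddCommGroup K] [Module R K]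
    (I J : Submodule R K) : WithBot ℕ∞ :=
  modLength R (I ⧸ (J.comap I.subtype))

/-- The image of an ideal of `R` in `K`, viewed as an `R`-submodule of `K`. -/
def idl (R : Type*) [CommRing R] (K : Type*) [CommRing K] [Algebra R K] (I : Ideal R) :
    Submodule R K :=
  Submodule.map (Algebra.linearMap R K) I

/-- The blowing-up `Λ(I) = ⋃ₙ (Iⁿ : Iⁿ)` of `R` along `I`, inside `K`. -/
def blowup (R : Type*) [CommRing R] (K : Type*) [CommRing K] [Algebra R K] (I : Ideal R) :
    Submodule R K :=
  ⨆ n : ℕ, (idl R K I ^ n) / (idl R K I ^ n)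

/-- The set of values of the nonzero elements of a fractional ideal. -/
def vvals {R : Type*} [CommRing R] {K : Type*} [CommRing K] [Algebra R K]
    (v : K → WithTop ℤ) (J : Submodule R K) : Set (WithTop ℤ) :=
  v '' {y | y ∈ J ∧ y ≠ 0}

/-! The blowing-up `Λ` is a ring between `R` and the integral closure, hence finitely generated,
so `ω`-duality gives `ω : (ω : Λ) = Λ`. If `ω ⊆ Λ`, then `ω : Λ = R : Λ` because `ω : ω = R`,
and the three conditions follow formally. Conversely `ω : Λ = ω (R : Λ) ⊆ ω (R : ω) ⊆ R`,
hence `ω ⊆ ω : (ω : Λ) = Λ`. -/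

namespace Submodule

variable {R A : Type*} [CommSemiring R] [CommSemiring A] [Algebra R A]

theorem div_mul_le_self (I J : Submodule R A) : I / J * J ≤ I :=
  le_div_iff_mul_le.mp le_rfl

theorem div_le_div_right {I I' : Submodule R A} (h : I ≤ I') (J : Submodule R A) :
    I / J ≤ I' / J :=
  le_div_iff_mul_le.mpr ((div_mul_le_self I J).trans h)

theorem div_le_div_left {J J' : Submodule R A} (h : J ≤ J') (I : Submodule R A) :
    I / J' ≤ I / J :=
  le_div_iff_mul_le.mpr ((mul_le_mul' le_rfl h).trans (div_mul_le_self I J'))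

theorem le_one_div_one_div (I : Submodule R A) : I ≤ 1 / (1 / I) := by
  rw [le_div_iff_mul_le, mul_comm]
  exact div_mul_le_self 1 I

theorem mul_one_div_le_div (I J : Submodule R A) : I * (1 / J) ≤ I / J := by
  rw [le_div_iff_mul_le, mul_assoc]
  calc I * (1 / J * J) ≤ I * 1 := mul_le_mul' le_rfl (div_mul_le_self 1 J)
    _ = I := mul_one I

theorem div_self_mul_div_self_le (J : Submodule R A) : J / J * (J / J) ≤ J / J := by
  rw [le_div_iff_mul_le, mul_assoc]
  exact (mul_le_mul' le_rfl (div_mul_le_self J J)).trans (div_mul_le_self J J)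

theorem div_self_le_mul_div_self_mul (J M : Submodule R A) : J / J ≤ J * M / (J * M) := by
  rw [le_div_iff_mul_le, ← mul_assoc]
  exact mul_le_mul' (div_mul_le_self J J) le_rfl

end Submodule

section Duality

variable {R A : Type*} [CommSemiring R] [CommSemiring A] [Algebra R A]
  {ω Λ : Submodule R A}

theorem div_eq_one_div_of_le (hω1 : 1 ≤ ω) (hωω : ω / ω = 1) (hΛΛ : Λ * Λ ≤ Λ) (h : ω ≤ Λ) :
    ω / Λ = 1 / Λ := by
  refine le_antisymm ?_ (Submodule.div_le_div_right hω1 Λ)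
  rw [← hωω, Submodule.le_div_iff_mul_le, Submodule.le_div_iff_mul_le, mul_assoc]
  calc ω / Λ * (Λ * ω) ≤ ω / Λ * Λ := mul_le_mul' le_rfl ((mul_le_mul' le_rfl h).trans hΛΛ)
    _ ≤ ω := div_mul_le_self ω Λ

theorem le_iff_of_div_div_eq (hω1 : 1 ≤ ω) (hωω : ω / ω = 1) (hΛΛ : Λ * Λ ≤ Λ)
    (hdual : ω / (ω / Λ) = Λ) :
    ω ≤ Λ ↔ Λ = 1 / (1 / Λ) ∧ ω / Λ = ω * (1 / Λ) ∧ 1 / Λ ≤ 1 / ω := by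
  constructor
  · intro h
    have key := div_eq_one_div_of_le hω1 hωω hΛΛ h
    refine ⟨le_antisymm (le_one_div_one_div Λ) ?_, le_antisymm ?_ (mul_one_div_le_div ω Λ),
      Submodule.div_le_div_left h 1⟩
    · calc 1 / (1 / Λ) = 1 / (ω / Λ) := by rw [key]
        _ ≤ ω / (ω / Λ) := Submodule.div_le_div_right hω1 _
        _ = Λ := hdual
    · calc ω / Λ = 1 * (1 / Λ) := by rw [key, one_mul]
        _ ≤ ω * (1 / Λ) := mul_le_mul' hω1 le_rfl
  · rintro ⟨-, hdiv, hanti⟩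
    have hle_one : ω / Λ ≤ 1 := by
      rw [hdiv]
      exact (mul_le_mul' le_rfl hanti).trans mul_one_div_le_one
    rw [← hdual, Submodule.le_div_iff_mul_le]
    calc ω * (ω / Λ) ≤ ω * 1 := mul_le_mul' le_rfl hle_one
      _ = ω := mul_one ω

end Duality

section Blowup

variable {R K : Type*} [CommRing R] [CommRing K] [Algebra R K]

theorem monotone_idl_pow_div_idl_pow (I : Ideal R) :
    Monotone fun n : ℕ => idl R K I ^ n / idl R K I ^ n :=
  monotone_nat_of_le_succ fun n => by
    simpa only [pow_succ] using div_self_le_mul_div_self_mul (idl R K I ^ n) (idl R K I)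

theorem one_le_blowup (I : Ideal R) : 1 ≤ blowup R K I :=
  (Submodule.le_div_iff_mul_le.mpr (by rw [pow_zero, one_mul])).trans
    (le_iSup (fun n => idl R K I ^ n / idl R K I ^ n) 0)

theorem blowup_mul_blowup_le (I : Ideal R) : blowup R K I * blowup R K I ≤ blowup R K I := by
  have hmono := monotone_idl_pow_div_idl_pow (K := K) I
  rw [blowup, iSup_mul]
  refine iSup_le fun m => ?_
  rw [mul_iSup]
  refine iSup_le fun n => ?_
  exact (mul_le_mul' (hmono (le_max_left m n)) (hmono (le_max_right m n))).trans
    ((div_self_mul_div_self_le _).trans (le_iSup (fun n => idl R K I ^ n / idl R K I ^ n) _))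

theorem idl_ne_bot [FaithfulSMul R K] {I : Ideal R} (hI : I ≠ ⊥) : idl R K I ≠ ⊥ := by
  obtain ⟨a, haI, ha0⟩ := Submodule.exists_mem_ne_zero_of_ne_bot hI
  exact Submodule.ne_bot_iff _ |>.mpr ⟨algebraMap R K a, ⟨a, haI, rfl⟩,
    (map_ne_zero_iff _ (FaithfulSMul.algebraMap_injective R K)).mpr ha0⟩

theorem blowup_le_integralClosure [IsNoetherianRing R] [IsDomain K] [FaithfulSMul R K]
    {I : Ideal R} (hI : I ≠ ⊥) : blowup R K I ≤ (integralClosure R K).toSubmodule :=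
  iSup_le fun n _ hz =>
    isIntegral_of_smul_mem_submodule _ (pow_ne_zero n (idl_ne_bot hI))
      (((IsNoetherian.noetherian I).map _).pow n) _ hz

theorem blowup_fg [IsNoetherianRing R] [IsDomain K] [FaithfulSMul R K]
    [Module.Finite R (integralClosure R K)] {I : Ideal R} (hI : I ≠ ⊥) : (blowup R K I).FG :=
  ((Submodule.fg_top _).mp Module.Finite.fg_top).of_le (blowup_le_integralClosure hI)

end Blowup

theorem stmt_8_general
    (R : Type*) [CommRing R] [IsNoetherianRing R]
    (K : Type*) [Field K] [Algebra R K] [IsFractionRing R K]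
    [Module.Finite R (integralClosure R K)]
    (I : Ideal R) (hI0 : I ≠ ⊥)
    (ω : Submodule R K) (hω1 : 1 ≤ ω)
    (hωω : ω / ω = 1)
    (hωdual : ∀ J : Submodule R K, J ≠ ⊥ → J.FG → ω / (ω / J) = J) :
    (ω ≤ (blowup R K I)) ↔
      ((blowup R K I) = (1 : Submodule R K) / ((1 : Submodule R K) / (blowup R K I)) ∧ ω / (blowup R K I) = ω * ((1 : Submodule R K) / (blowup R K I)) ∧
        (1 : Submodule R K) / (blowup R K I) ≤ (1 : Submodule R K) / ω) := by
  have hΛ : blowup R K I ≠ ⊥ :=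
    Submodule.ne_bot_iff _ |>.mpr ⟨1, one_le.mp (one_le_blowup I), one_ne_zero⟩
  exact le_iff_of_div_div_eq hω1 hωω (blowup_mul_blowup_le I) (hωdual _ hΛ (blowup_fg hI0))

theorem stmt_8
    (R : Type*) [CommRing R] [IsDomain R] [IsLocalRing R] [IsNoetherianRing R]
    (K : Type*) [Field K] [Algebra R K] [IsFractionRing R K]
    [IsDiscreteValuationRing (integralClosure R K)]
    [Module.Finite R (integralClosure R K)]
    (hres : ∀ y : integralClosure R K, ∃ a : R,
      y - algebraMap R (integralClosure R K) a ∈ maximalIdeal (integralClosure R K))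
    (hkinf : Infinite (ResidueField R))
    (I : Ideal R) (hI0 : I ≠ ⊥) (hIrad : I.radical = maximalIdeal R)
    (hInp : ¬ I.IsPrincipal)
    (x : R) (hxI : x ∈ I)
    (ν : ℕ) (hν : IsLeast {n : ℕ | ∀ k ≥ n, I ^ (k + 1) = Ideal.span {x} * I ^ k} ν)
    (ω : Submodule R K) (hω1 : 1 ≤ ω) (hω2 : ω < ((integralClosure R K).toSubmodule))
    (hωω : ω / ω = 1)
    (hωdual : ∀ J : Submodule R K, J ≠ ⊥ → J.FG → ω / (ω / J) = J) :
    (ω ≤ (blowup R K I)) ↔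
      ((blowup R K I) = (1 : Submodule R K) / ((1 : Submodule R K) / (blowup R K I)) ∧ ω / (blowup R K I) = ω * ((1 : Submodule R K) / (blowup R K I)) ∧
        (1 : Submodule R K) / (blowup R K I) ≤ (1 : Submodule R K) / ω) :=
  stmt_8_general R K I hI0 ω hω1 hωω hωdual
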